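/- Let PQ be a segment in ℝ² with midpoint m, and let L, R be on opposite sides of line PQ with triangles LPQ, RPQ a non-degenerate Delaunay pair with circumcenters c_λ, c_ρ. Consider the quadrilateral dual region of vertex P contributed by this pair, assembled from the four elementary dual triangles (P, m, c_λ), (P, m, c_ρ) with DEC signs. Then the net signed area equals ½·⟨m − P, m − P⟩^{1/2} times a positive quantity; concretely, writing u for the unit normal to PQ pointing toward R and hλ = ⟨c_λ − m, u⟩, hρ = ⟨c_ρ − m, u⟩, the net signed area is ½·|P m|·(hρ − hλ) > 0. -/

import Mathlib

open scoped RealInnerProductSpace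

/-!
Both circumcenters lie on the perpendicular bisector of `PQ`, which in the plane is the line
`m + ℝ u`; so `c = m + h • u` with `h = ⟪c - m, u⟫`, and the dual triangle `(P, m, c)` has base
`|Pm|` and height `|h|`. The DEC sign turns `|h|` back into `∓h`, giving the formula. For
positivity, `h ↦ dist R (m + h • u)² - dist P (m + h • u)²` is affine with slope
`-2 ⟪R - m, u⟫ < 0`; it vanishes at `hρ` and is positive at `hλ` by the Delaunay condition,
so `hλ < hρ`.
-/

/-- The planar determinant `det(v, w)` of two vectors of `ℝ²`. -/
noncomputable def det2 (v w : EuclideanSpace ℝ (Fin 2)) : ℝ := v 0 * w 1 - v 1 * w 0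

/-- Unsigned area of the triangle with vertices `p`, `q`, `r` in `ℝ²`. -/
noncomputable def triArea (p q r : EuclideanSpace ℝ (Fin 2)) : ℝ :=
  |det2 (q - p) (r - p)| / 2

open Module

section InnerProductSpace

variable {E : Type*} [NormedAddCommGroup E] [InnerProductSpace ℝ E]

theorem eq_inner_smul_of_inner_eq_zero [FiniteDimensional ℝ E] (hE : finrank ℝ E = 2)
    {u v w : E} (hu : ‖u‖ = 1) (hw : w ≠ 0) (huw : ⟪u, w⟫ = 0) (hvw : ⟪v, w⟫ = 0) :
    v = ⟪v, u⟫ • u := by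
  set K := (ℝ ∙ w)ᗮ
  have hK : finrank ℝ K = 1 :=
    Submodule.finrank_add_finrank_orthogonal' (by rw [finrank_span_singleton hw, hE])
  have hu0 : (⟨u, Submodule.mem_orthogonal_singleton_iff_inner_left.mpr huw⟩ : K) ≠ 0 := by
    rw [ne_eq, Submodule.mk_eq_zero, ← norm_eq_zero, hu]; exact one_ne_zero
  obtain ⟨c, hc⟩ := (finrank_eq_one_iff_of_nonzero' _ hu0).mp hK
    ⟨v, Submodule.mem_orthogonal_singleton_iff_inner_left.mpr hvw⟩
  have hcv : c • u = v := congrArg Subtype.val hc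
  rw [← hcv, real_inner_smul_left, real_inner_self_eq_norm_sq, hu, one_pow, mul_one]

theorem dist_sq_sub_dist_sq_add_smul {m u P R : E} (hP : ⟪m - P, u⟫ = 0) (h : ℝ) :
    dist R (m + h • u) ^ 2 - dist P (m + h • u) ^ 2
      = ‖R - m‖ ^ 2 - ‖P - m‖ ^ 2 - 2 * h * ⟪R - m, u⟫ := by
  have key : ∀ X : E, dist X (m + h • u) ^ 2
      = ‖X - m‖ ^ 2 - 2 * h * ⟪X - m, u⟫ + h ^ 2 * ‖u‖ ^ 2 := by
    intro X
    rw [dist_eq_norm, show X - (m + h • u) = (X - m) - h • u by abel, norm_sub_sq_real,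
      real_inner_smul_right, norm_smul, mul_pow, Real.norm_eq_abs, sq_abs]
    ring
  rw [key, key, ← neg_sub m P, inner_neg_left, hP]
  ring

theorem lt_of_dist_add_smul_lt {m u P R : E} {hl hr : ℝ} (hP : ⟪m - P, u⟫ = 0)
    (hR : 0 < ⟪R - m, u⟫) (hcr : dist R (m + hr • u) = dist P (m + hr • u))
    (hcl : dist P (m + hl • u) < dist R (m + hl • u)) : hl < hr := by
  have hl' := dist_sq_sub_dist_sq_add_smul (R := R) hP hl
  have hr' := dist_sq_sub_dist_sq_add_smul (R := R) hP hr
  have hsq : dist P (m + hl • u) ^ 2 < dist R (m + hl • u) ^ 2 := by gcongr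
  rw [hcr, sub_self] at hr'
  nlinarith

theorem eq_midpoint_add_inner_smul_of_dist_eq [FiniteDimensional ℝ E] (hE : finrank ℝ E = 2)
    {P Q c u : E} (hPQ : P ≠ Q) (hu : ‖u‖ = 1) (huPQ : ⟪u, Q - P⟫ = 0)
    (hc : dist c P = dist c Q) :
    c = midpoint ℝ P Q + ⟪c - midpoint ℝ P Q, u⟫ • u := by
  have hbis := AffineSubspace.mem_perpBisector_iff_inner_eq_zero.mp
    (AffineSubspace.mem_perpBisector_iff_dist_eq.mpr hc)
  exact eq_add_of_sub_eq' <|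
    eq_inner_smul_of_inner_eq_zero hE hu (sub_ne_zero.mpr hPQ.symm) huPQ hbis

end InnerProductSpace

theorem det2_self (v : EuclideanSpace ℝ (Fin 2)) : det2 v v = 0 := by
  unfold det2; ring

theorem det2_add_smul_right (v w x : EuclideanSpace ℝ (Fin 2)) (a : ℝ) :
    det2 v (w + a • x) = det2 v w + a * det2 v x := by
  simp only [det2, PiLp.add_apply, PiLp.smul_apply, smul_eq_mul]; ring

theorem det2_sq_add_inner_sq (v w : EuclideanSpace ℝ (Fin 2)) :
    det2 v w ^ 2 + ⟪v, w⟫ ^ 2 = ‖v‖ ^ 2 * ‖w‖ ^ 2 := by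
  simp only [det2, EuclideanSpace.norm_sq_eq, EuclideanSpace.inner_eq_star_dotProduct,
    Fin.sum_univ_two, Real.norm_eq_abs, sq_abs]
  simp [dotProduct, Fin.sum_univ_two]
  ring

theorem abs_det2_eq_norm {v w : EuclideanSpace ℝ (Fin 2)} (hw : ‖w‖ = 1) (hvw : ⟪v, w⟫ = 0) :
    |det2 v w| = ‖v‖ := by
  have h := det2_sq_add_inner_sq v w
  rw [hvw, hw] at h
  rw [← sq_eq_sq₀ (abs_nonneg _) (norm_nonneg _), sq_abs]
  linarith

theorem triArea_add_smul {P m u : EuclideanSpace ℝ (Fin 2)} (hu : ‖u‖ = 1)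
    (hmP : ⟪m - P, u⟫ = 0) (h : ℝ) :
    triArea P m (m + h • u) = |h| * dist P m / 2 := by
  rw [triArea, show m + h • u - P = (m - P) + h • u by abel, det2_add_smul_right, det2_self,
    zero_add, abs_mul, abs_det2_eq_norm hu hmP, dist_comm, dist_eq_norm]

theorem ite_neg_mul_abs (h : ℝ) : (if h < 0 then (1 : ℝ) else -1) * |h| = -h := by
  split_ifs with hh
  · rw [one_mul, abs_of_neg hh]
  · rw [abs_of_nonneg (not_lt.mp hh)]; ring

theorem ite_pos_mul_abs (h : ℝ) : (if 0 < h then (1 : ℝ) else -1) * |h| = h := by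
  split_ifs with hh
  · rw [one_mul, abs_of_pos hh]
  · rw [abs_of_nonpos (not_lt.mp hh)]; ring

theorem vertex_dual_pair_area_formula_general
    (P Q R cl cr m u : EuclideanSpace ℝ (Fin 2))
    (hPQ : P ≠ Q)
    (hm : m = midpoint ℝ P Q)
    (hu : ‖u‖ = 1) (huPQ : ⟪u, Q - P⟫ = 0)
    (hRside : 0 < ⟪R - m, u⟫)
    (hclP : dist cl P = dist cl Q)
    (hcrP : dist cr P = dist cr Q) (hcrR : dist cr P = dist cr R)
    (hDel : dist R cl > dist P cl) :
    (if ⟪cl - m, u⟫ < 0 then (1 : ℝ) else -1) * triArea P m cl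
        + (if 0 < ⟪cr - m, u⟫ then (1 : ℝ) else -1) * triArea P m cr
      = 1 / 2 * dist P m * (⟪cr - m, u⟫ - ⟪cl - m, u⟫) ∧
    0 < 1 / 2 * dist P m * (⟪cr - m, u⟫ - ⟪cl - m, u⟫) := by
  have hmP : ⟪m - P, u⟫ = 0 := by
    rw [hm, ← vsub_eq_sub, midpoint_vsub_left, real_inner_smul_left, vsub_eq_sub,
      real_inner_comm, huPQ, mul_zero]
  have hPm : 0 < dist P m := by
    rw [hm, dist_pos, ne_eq, eq_comm, midpoint_eq_left_iff]
    exact hPQ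
  have hdim : finrank ℝ (EuclideanSpace ℝ (Fin 2)) = 2 := finrank_euclideanSpace_fin
  have hcl := hm ▸ eq_midpoint_add_inner_smul_of_dist_eq hdim hPQ hu huPQ hclP
  have hcr := hm ▸ eq_midpoint_add_inner_smul_of_dist_eq hdim hPQ hu huPQ hcrP
  set hl := ⟪cl - m, u⟫
  set hr := ⟪cr - m, u⟫
  have hlr : hl < hr := by
    refine lt_of_dist_add_smul_lt hmP hRside ?_ ?_
    · rw [← hcr, dist_comm, ← hcrR, dist_comm]
    · rwa [← hcl]
  rw [hcl, hcr, triArea_add_smul hu hmP, triArea_add_smul hu hmP]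
  refine ⟨?_, by positivity⟩
  linear_combination (dist P m / 2) * (ite_neg_mul_abs hl + ite_pos_mul_abs hr)

/-- For a non-degenerate Delaunay pair of triangles `LPQ`, `RPQ` across edge `PQ` with
midpoint `m`, circumcenters `cl`, `cr`, and `u` the unit normal to `PQ` toward `R`'s side:
the net signed area of the two elementary dual triangles `(P, m, cl)` and `(P, m, cr)` of
vertex `P` (with DEC signs) equals `½ · |Pm| · (hρ - hλ)` where `hλ = ⟪cl - m, u⟫` and
`hρ = ⟪cr - m, u⟫`, and this quantity is strictly positive. -/
theorem vertex_dual_pair_area_formula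
    (P Q L R cl cr m u : EuclideanSpace ℝ (Fin 2))
    (hPQ : P ≠ Q)
    (hm : m = midpoint ℝ P Q)
    (hu : ‖u‖ = 1) (huPQ : ⟪u, Q - P⟫ = 0)
    (hLside : ⟪L - m, u⟫ < 0) (hRside : 0 < ⟪R - m, u⟫)
    (hclP : dist cl P = dist cl Q) (hclL : dist cl P = dist cl L)
    (hcrP : dist cr P = dist cr Q) (hcrR : dist cr P = dist cr R)
    (hDel : dist R cl > dist P cl) :
    (if ⟪cl - m, u⟫ < 0 then (1 : ℝ) else -1) * triArea P m cl
        + (if 0 < ⟪cr - m, u⟫ then (1 : ℝ) else -1) * triArea P m cr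
      = 1 / 2 * dist P m * (⟪cr - m, u⟫ - ⟪cl - m, u⟫) ∧
    0 < 1 / 2 * dist P m * (⟪cr - m, u⟫ - ⟪cl - m, u⟫) :=
  vertex_dual_pair_area_formula_general P Q R cl cr m u hPQ hm hu huPQ hRside hclP hcrP hcrR hDel
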